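/- Sequential cooperation inclusion for Angel: For all hybrid games α, β and all sets of states X, Y ⊆ S, it holds (for the one-argument zero-sum dGL winning regions) that ς_α(ς_{β^{-d}}(X ∩ Y) ∪ ς_β(X)) ∩ (ς_α(ς_β(X)))ᶜ ⊆ ς_{α^{-d}}(ς_{β^{-d}}(X ∩ Y)). In words: if Angel can win α into the region where either the coalition can win β for X ∩ Y or she can win β for X alone, but she cannot win α into the region where she can win β for X alone, then the coalition can win α^{-d} into the region where the coalition can win β^{-d} for X ∩ Y. -/
import Mathlib


open Set

/-- Hybrid games over a variable set `V`. Terms/ODE right-hand sides are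
interpreted as functions from states `V → ℝ` to `ℝ`; tests and evolution
domain constraints are sets of states. -/
inductive Game (V : Type*) where
  | assign (x : V) (e : (V → ℝ) → ℝ)
  | ode (x : V) (f : (V → ℝ) → ℝ) (Q : Set (V → ℝ))
  | test (Q : Set (V → ℝ))
  | choice (a b : Game V)
  | seq (a b : Game V)
  | dual (a : Game V)
  | star (a : Game V)

variable {V : Type*} [DecidableEq V]

/-- `φ : ℝ → (V → ℝ)` (restricted to `[0,r]`) is a solution of `x' = f(x) & Q`
of duration `r ≥ 0`: `t ↦ φ t x` is differentiable with derivative `f (φ s)`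
at each `s ∈ [0,r]`, `φ s ∈ Q` on `[0,r]`, and all other variables stay
constant along `φ`. -/
def IsSolution (x : V) (f : (V → ℝ) → ℝ) (Q : Set (V → ℝ)) (r : ℝ)
    (φ : ℝ → (V → ℝ)) : Prop :=
  0 ≤ r ∧
  (∀ s ∈ Set.Icc 0 r, HasDerivAt (fun t => φ t x) (f (φ s)) s) ∧
  (∀ s ∈ Set.Icc 0 r, φ s ∈ Q) ∧
  (∀ s ∈ Set.Icc 0 r, ∀ y, y ≠ x → φ s y = φ 0 y)

mutual
/-- Angel's semi-competitive winning region ς_α(X,Y). -/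
def angel : Game V → Set (V → ℝ) → Set (V → ℝ) → Set (V → ℝ)
  | .assign x e, X, _ => {ω | Function.update ω x (e ω) ∈ X}
  | .ode x f Q, X, _ =>
      {ω | ∃ r φ, IsSolution x f Q r φ ∧ φ 0 = ω ∧ φ r ∈ X}
  | .test Q, X, _ => Q ∩ X
  | .choice a b, X, Y => angel a X Y ∪ angel b X Y
  | .seq a b, X, Y => angel a (angel b X Y) (demon b X Y)
  | .dual a, X, Y => demon a Y X
  | .star a, X, Y =>
      ⋂₀ {Z | X ∪ angel a Z Zᶜ ⊆ Z} ∪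
      ⋂₀ {Z | (X ∩ Y) ∪ (angel a Z Z ∩ demon a Z Z) ⊆ Z}

/-- Demon's semi-competitive winning region δ_α(X,Y). -/
def demon : Game V → Set (V → ℝ) → Set (V → ℝ) → Set (V → ℝ)
  | .assign x e, _, Y => {ω | Function.update ω x (e ω) ∈ Y}
  | .ode x f Q, X, Y =>
      {ω | ∀ r φ, IsSolution x f Q r φ → φ 0 = ω → ∀ s ∈ Set.Icc 0 r, φ s ∈ Y} ∪
      {ω | ∃ r φ, IsSolution x f Q r φ ∧ φ 0 = ω ∧ ∃ s ∈ Set.Icc 0 r, φ s ∈ X ∩ Y}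
  | .test Q, _, Y => Qᶜ ∪ Y
  | .choice a b, X, Y =>
      (demon a X Y ∩ demon b X Y) ∪ (demon a X Y ∩ angel a X Y) ∪
      (demon b X Y ∩ angel b X Y)
  | .seq a b, X, Y => demon a (angel b X Y) (demon b X Y)
  | .dual a, X, Y => angel a Y X
  | .star a, X, Y =>
      ⋃₀ {Z | Z ⊆ Y ∩ demon a Zᶜ Z} ∪
      ⋂₀ {Z | (X ∩ Y) ∪ (angel a Z Z ∩ demon a Z Z) ⊆ Z}
end

/-- Angel's one-argument zero-sum dGL winning region ς_α(X). -/
def dglAngel : Game V → Set (V → ℝ) → Set (V → ℝ)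
  | .assign x e, X => {ω | Function.update ω x (e ω) ∈ X}
  | .ode x f Q, X => {ω | ∃ r φ, IsSolution x f Q r φ ∧ φ 0 = ω ∧ φ r ∈ X}
  | .test Q, X => Q ∩ X
  | .choice a b, X => dglAngel a X ∪ dglAngel b X
  | .seq a b, X => dglAngel a (dglAngel b X)
  | .dual a, X => (dglAngel a Xᶜ)ᶜ
  | .star a, X => ⋂₀ {Z | X ∪ dglAngel a Z ⊆ Z}

/-- Demon's one-argument zero-sum dGL winning region δ_α(X) = (ς_α(Xᶜ))ᶜ. -/
def dglDemon (g : Game V) (X : Set (V → ℝ)) : Set (V → ℝ) :=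
  (dglAngel g Xᶜ)ᶜ

/-- Systematization α^{-d}: removes all dual operators. -/
def Game.sys : Game V → Game V
  | .assign x e => .assign x e
  | .ode x f Q => .ode x f Q
  | .test Q => .test Q
  | .choice a b => .choice a.sys b.sys
  | .seq a b => .seq a.sys b.sys
  | .dual a => a.sys
  | .star a => .star a.sys

theorem dglAngel_mono (α : Game V) :
    ∀ {X Y : Set (V → ℝ)}, X ⊆ Y → dglAngel α X ⊆ dglAngel α Y := by
  induction α with
  | assign x e => intro X Y h ω hω; exact h hω
  | ode x f Q =>
      rintro X Y h ω ⟨r, φ, hs, h0, hr⟩; exact ⟨r, φ, hs, h0, h hr⟩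
  | test Q => intro X Y h; exact inter_subset_inter_right _ h
  | choice a b ia ib => intro X Y h; exact union_subset_union (ia h) (ib h)
  | seq a b ia ib => intro X Y h; exact ia (ib h)
  | dual a ia =>
      intro X Y h
      exact compl_subset_compl.2 (ia (compl_subset_compl.2 h))
  | star a ia =>
      intro X Y h
      exact sInter_subset_sInter (fun Z hZ => (union_subset_union_left _ h).trans hZ)

theorem dglAngel_star_prefix (a : Game V) (X : Set (V → ℝ)) :
    X ∪ dglAngel a (dglAngel (.star a) X) ⊆ dglAngel (.star a) X := by
  intro ω hω
  have heq : dglAngel (.star a) X = ⋂₀ {Z | X ∪ dglAngel a Z ⊆ Z} := rfl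
  rw [heq, mem_sInter]
  intro Z hZ
  apply hZ
  rcases hω with h | h
  · exact Or.inl h
  · exact Or.inr (dglAngel_mono a (sInter_subset_of_mem hZ) h)

theorem dglAngel_sys_union (α : Game V) :
    ∀ A B : Set (V → ℝ),
      dglAngel α (A ∪ B) ⊆ dglAngel α.sys A ∪ dglAngel α B := by
  induction α with
  | assign x e =>
      intro A B ω hω
      rcases hω with h | h
      · exact Or.inl h
      · exact Or.inr h
  | ode x f Q =>
      rintro A B ω ⟨r, φ, hs, h0, hr⟩
      rcases hr with h | h
      · exact Or.inl ⟨r, φ, hs, h0, h⟩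
      · exact Or.inr ⟨r, φ, hs, h0, h⟩
  | test Q =>
      rintro A B ω ⟨hQ, h⟩
      rcases h with h | h
      · exact Or.inl ⟨hQ, h⟩
      · exact Or.inr ⟨hQ, h⟩
  | choice a b ia ib =>
      intro A B ω hω
      rcases hω with h | h
      · rcases ia A B h with h' | h'
        · exact Or.inl (Or.inl h')
        · exact Or.inr (Or.inl h')
      · rcases ib A B h with h' | h'
        · exact Or.inl (Or.inr h')
        · exact Or.inr (Or.inr h')
  | seq a b ia ib =>
      intro A B
      calc dglAngel (Game.seq a b) (A ∪ B)
          = dglAngel a (dglAngel b (A ∪ B)) := rfl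
        _ ⊆ dglAngel a (dglAngel b.sys A ∪ dglAngel b B) :=
            dglAngel_mono a (ib A B)
        _ ⊆ dglAngel a.sys (dglAngel b.sys A) ∪ dglAngel a (dglAngel b B) :=
            ia _ _
  | dual a ia =>
      intro A B ω hω
      by_contra hcon
      rw [mem_union, not_or] at hcon
      obtain ⟨h1, h2⟩ := hcon
      have h2' : ω ∈ dglAngel a Bᶜ := not_not.1 h2
      have hsub : Bᶜ ⊆ A ∪ (A ∪ B)ᶜ := by
        intro s hs
        by_cases hA : s ∈ A
        · exact Or.inl hA
        · exact Or.inr (fun h => h.elim hA hs)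
      have : ω ∈ dglAngel a.sys A ∪ dglAngel a (A ∪ B)ᶜ :=
        ia A ((A ∪ B)ᶜ) (dglAngel_mono a hsub h2')
      rcases this with h | h
      · exact h1 h
      · exact hω h
  | star a ia =>
      intro A B
      have key : (A ∪ B) ∪ dglAngel a
          (dglAngel (.star a.sys) A ∪ dglAngel (.star a) B) ⊆
          dglAngel (.star a.sys) A ∪ dglAngel (.star a) B := by
        intro ω hω
        rcases hω with (h | h) | h
        · exact Or.inl (dglAngel_star_prefix a.sys A (Or.inl h))
        · exact Or.inr (dglAngel_star_prefix a B (Or.inl h))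
        · rcases ia _ _ h with h' | h'
          · exact Or.inl (dglAngel_star_prefix a.sys A (Or.inr h'))
          · exact Or.inr (dglAngel_star_prefix a B (Or.inr h'))
      exact sInter_subset_of_mem key

/-- Sequential cooperation inclusion for Angel:
`ς_α(ς_{β^{-d}}(X ∩ Y) ∪ ς_β(X)) ∩ (ς_α(ς_β(X)))ᶜ ⊆ ς_{α^{-d}}(ς_{β^{-d}}(X ∩ Y))`. -/
theorem seq_cooperation_incl_angel (α β : Game V) (X Y : Set (V → ℝ)) :
    dglAngel α (dglAngel β.sys (X ∩ Y) ∪ dglAngel β X) ∩ (dglAngel α (dglAngel β X))ᶜ ⊆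
      dglAngel α.sys (dglAngel β.sys (X ∩ Y)) := by
  rintro ω ⟨h1, h2⟩
  rcases dglAngel_sys_union α _ _ h1 with h | h
  · exact h
  · exact absurd h h2
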